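/- arXiv:2407.03065 — 4 statements merged into one kernel-verified Lean document; each statement's English description precedes it below -/
import Mathlib

section
/- Let N and M be positive definite d×d real matrices with N ⪰ M (i.e., N − M positive semidefinite). Then for any vector v ∈ ℝ^d, v^T N v ≤ (det N / det M) · v^T M v. -/
/-!
With `S = √M`, the matrix `A = S⁻¹ N S⁻¹` satisfies `1 ≤ A` in the Loewner order, so its
eigenvalues are all at least `1`; each is then at most their product `det A = det N / det M`,
whence `A ≤ det A • 1`. Conjugating back by `S` gives `N ≤ (det N / det M) • M`.
-/

open Matrix
open scoped MatrixOrder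

namespace Matrix

variable {n : Type*} [Fintype n] [DecidableEq n]

theorem le_det_smul_one_of_one_le {A : Matrix n n ℝ} (hA : 1 ≤ A) : A ≤ A.det • 1 := by
  have hH : A.IsHermitian := sub_add_cancel A 1 ▸ (le_iff.mp hA).isHermitian.add isHermitian_one
  have heig : ∀ i, 1 ≤ hH.eigenvalues i := fun i =>
    (CFC.one_le_iff A).mp hA _ (hH.eigenvalues_mem_spectrum_real i)
  rw [← Algebra.algebraMap_eq_smul_one, le_algebraMap_iff_spectrum_le,
    hH.spectrum_real_eq_range_eigenvalues]
  rintro _ ⟨i, rfl⟩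
  rw [hH.det_eq_prod_eigenvalues]
  simpa using Finset.prod_le_prod_of_subset_of_one_le (Finset.subset_univ {i})
    (fun j _ => zero_le_one.trans (heig j)) (fun j _ _ => heig j)

theorem le_det_div_det_smul_of_le {M N : Matrix n n ℝ} (hM : M.PosDef) (hMN : M ≤ N) :
    N ≤ (N.det / M.det) • M := by
  set S := CFC.sqrt M
  have hS : IsSelfAdjoint S := .of_nonneg (CFC.sqrt_nonneg M)
  have hSS : S * S = M := CFC.sqrt_mul_sqrt_self M
  have hSdet : IsUnit S.det := (isUnit_iff_isUnit_det S).mp hM.isStrictlyPositive.sqrt.isUnit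
  have hSinv : IsSelfAdjoint S⁻¹ := by
    rw [IsSelfAdjoint, star_eq_conjTranspose, conjTranspose_nonsing_inv, show Sᴴ = S from hS]
  have hSinvM : S⁻¹ * M * S⁻¹ = 1 := by
    rw [← hSS, ← mul_assoc, nonsing_inv_mul _ hSdet, one_mul, mul_nonsing_inv _ hSdet]
  have hA : 1 ≤ S⁻¹ * N * S⁻¹ := hSinvM ▸ hSinv.conjugate_le_conjugate hMN
  have hdet : (S⁻¹ * N * S⁻¹).det = N.det / M.det := by
    have := congrArg det hSinvM
    simp only [det_mul, det_one] at this ⊢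
    rw [eq_div_iff hM.det_pos.ne']
    linear_combination N.det * this
  calc N = S * (S⁻¹ * N * S⁻¹) * S := by
        rw [← mul_assoc, ← mul_assoc, mul_nonsing_inv _ hSdet, one_mul, mul_assoc,
          nonsing_inv_mul _ hSdet, mul_one]
    _ ≤ S * ((S⁻¹ * N * S⁻¹).det • 1) * S :=
        hS.conjugate_le_conjugate (le_det_smul_one_of_one_le hA)
    _ = (N.det / M.det) • M := by rw [hdet, mul_smul_comm, smul_mul_assoc, mul_one, hSS]

end Matrix

theorem matrix_norm_inequality_general {d : ℕ} (N M : Matrix (Fin d) (Fin d) ℝ)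
    (hM : M.PosDef) (hNM : (N - M).PosSemidef)
    (v : Fin d → ℝ) :
    v ⬝ᵥ N.mulVec v ≤ (N.det / M.det) * (v ⬝ᵥ M.mulVec v) := by
  have h := (le_iff.mp (le_det_div_det_smul_of_le hM hNM)).dotProduct_mulVec_nonneg v
  simp only [star_trivial, sub_mulVec, smul_mulVec, dotProduct_sub, dotProduct_smul,
    smul_eq_mul] at h
  linarith

theorem matrix_norm_inequality {d : ℕ} (N M : Matrix (Fin d) (Fin d) ℝ)
    (hN : N.PosDef) (hM : M.PosDef) (hNM : (N - M).PosSemidef)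
    (v : Fin d → ℝ) :
    v ⬝ᵥ N.mulVec v ≤ (N.det / M.det) * (v ⬝ᵥ M.mulVec v) :=
  matrix_norm_inequality_general N M hM hNM v
end

section
/- Let z_1, …, z_T ∈ ℝ^{d} satisfy ‖z_t‖² ≤ λ for all t, where λ > 0, and define V_t = λI + Σ_{s=1}^{t−1} z_s z_s^T. Then Σ_{t=1}^T z_t^T V_t^{-1} z_t ≤ 2 d log(T+1). -/
/-!
Write `a_t = z_tᵀ V_t⁻¹ z_t`. Since `V_t ≥ λI` and `‖z_t‖² ≤ λ`, Cauchy–Schwarz gives `a_t ≤ 1`, so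
`a_t ≤ 2 log (1 + a_t)`. By the matrix determinant lemma `det V_{t+1} = det V_t (1 + a_t)`, so the
sum of the `log (1 + a_t)` telescopes to `log det V_{T+1} - log det V_1`. Finally `det V_1 = λ^d`
and `V_{T+1} ≤ λ(T+1) I` bounds every eigenvalue, hence `det V_{T+1} ≤ (λ(T+1))^d`.
-/

open Matrix Finset
open scoped MatrixOrder

theorem Real.le_two_mul_log_one_add {x : ℝ} (h₀ : 0 ≤ x) (h₂ : x ≤ 2) :
    x ≤ 2 * Real.log (1 + x) := by
  have := Real.le_log_one_add_of_nonneg h₀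
  rw [div_le_iff₀ (by linarith)] at this
  nlinarith

theorem Matrix.det_add_vecMulVec {ι R : Type*} [Fintype ι] [DecidableEq ι] [CommRing R]
    {A : Matrix ι ι R} (hA : IsUnit A.det) (u v : ι → R) :
    (A + vecMulVec u v).det = A.det * (1 + v ⬝ᵥ A⁻¹ *ᵥ u) := by
  rw [vecMulVec_eq Unit, det_add_replicateCol_mul_replicateRow hA,
    det_unique (1 + _ : Matrix Unit Unit R), Matrix.mul_assoc, ← replicateCol_mulVec]
  simp [replicateRow_mul_replicateCol_apply]

namespace Matrix

variable {ι : Type*} [Fintype ι]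

theorem dotProduct_sq_le (v w : ι → ℝ) : (v ⬝ᵥ w) ^ 2 ≤ (v ⬝ᵥ v) * (w ⬝ᵥ w) := by
  simpa [dotProduct, sq] using sum_mul_sq_le_sq_mul_sq univ v w

theorem posSemidef_sum_vecMulVec_self {κ : Type*} (s : Finset κ) (z : κ → ι → ℝ) :
    (∑ i ∈ s, vecMulVec (z i) (z i)).PosSemidef :=
  posSemidef_sum s fun i _ => posSemidef_vecMulVec_self_star (z i)

variable [DecidableEq ι]

theorem vecMulVec_self_le_smul_one (v : ι → ℝ) : vecMulVec v v ≤ (v ⬝ᵥ v) • 1 := by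
  refine PosSemidef.of_dotProduct_mulVec_nonneg ((isHermitian_one.smul (IsSelfAdjoint.all _)).sub
    (posSemidef_vecMulVec_self_star v).isHermitian) fun x => ?_
  rw [sub_mulVec, dotProduct_sub, smul_mulVec, one_mulVec, dotProduct_smul, vecMulVec_mulVec]
  simp only [star_trivial, op_smul_eq_smul, dotProduct_smul, smul_eq_mul, dotProduct_comm x v]
  nlinarith [dotProduct_sq_le v x]

theorem det_le_pow_card_of_le_smul_one {A : Matrix ι ι ℝ} (hA : A.PosSemidef) {c : ℝ}
    (hc : A ≤ c • 1) : A.det ≤ c ^ Fintype.card ι := by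
  have hspec := (le_algebraMap_iff_spectrum_le (R := ℝ) hA.isHermitian).1
    (by rwa [Algebra.algebraMap_eq_smul_one])
  rw [hA.isHermitian.det_eq_prod_eigenvalues, ← card_univ, ← prod_const]
  exact prod_le_prod (fun i _ => mod_cast hA.eigenvalues_nonneg i)
    fun i _ => hspec _ (hA.isHermitian.eigenvalues_mem_spectrum_real i)

theorem dotProduct_inv_mulVec_le_one {A : Matrix ι ι ℝ} (hA : A.PosDef) {lam : ℝ}
    (hlam : lam • 1 ≤ A) {v : ι → ℝ} (hv : v ⬝ᵥ v ≤ lam) : v ⬝ᵥ A⁻¹ *ᵥ v ≤ 1 := by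
  set w := A⁻¹ *ᵥ v
  have hAw : A *ᵥ w = v := by
    simp [w, mulVec_mulVec, mul_nonsing_inv _ hA.det_pos.ne'.isUnit]
  have hquad : lam * (w ⬝ᵥ w) ≤ v ⬝ᵥ w := by
    have := hlam.dotProduct_mulVec_nonneg w
    rw [sub_mulVec, dotProduct_sub, hAw, smul_mulVec, one_mulVec, dotProduct_smul] at this
    simp only [star_trivial, smul_eq_mul, dotProduct_comm w v] at this
    linarith
  have hww : 0 ≤ w ⬝ᵥ w := by simpa using dotProduct_star_self_nonneg w
  -- `(v ⬝ᵥ w)² ≤ (v ⬝ᵥ v)(w ⬝ᵥ w) ≤ lam (w ⬝ᵥ w) ≤ v ⬝ᵥ w`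
  nlinarith [dotProduct_sq_le v w]

theorem sum_dotProduct_inv_mulVec_le_two_mul_log_det {T : ℕ} (A : ℕ → Matrix ι ι ℝ)
    (v : Fin T → ι → ℝ) (hA : ∀ n, (A n).PosDef)
    (hstep : ∀ t : Fin T, A (t + 1) = A t + vecMulVec (v t) (v t))
    (hv : ∀ t : Fin T, v t ⬝ᵥ (A t)⁻¹ *ᵥ v t ≤ 1) :
    ∑ t, v t ⬝ᵥ (A t)⁻¹ *ᵥ v t ≤ 2 * (Real.log (A T).det - Real.log (A 0).det) := by
  set f : ℕ → ℝ := fun n => Real.log (A n).det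
  have hnonneg (t : Fin T) : 0 ≤ v t ⬝ᵥ (A t)⁻¹ *ᵥ v t := by
    simpa using (hA t).inv.posSemidef.dotProduct_mulVec_nonneg (v t)
  have hlog (t : Fin T) : Real.log (1 + v t ⬝ᵥ (A t)⁻¹ *ᵥ v t) = f (t + 1) - f t := by
    rw [eq_sub_iff_add_eq', ← Real.log_mul (hA t).det_pos.ne' (by linarith [hnonneg t]),
      ← det_add_vecMulVec (hA t).det_pos.ne'.isUnit, ← hstep]
  calc ∑ t, v t ⬝ᵥ (A t)⁻¹ *ᵥ v t
      ≤ ∑ t : Fin T, 2 * (f (t + 1) - f t) := sum_le_sum fun t _ =>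
        hlog t ▸ Real.le_two_mul_log_one_add (hnonneg t) (by linarith [hv t])
    _ = 2 * (f T - f 0) := by
        rw [← mul_sum, Fin.sum_univ_eq_sum_range (fun n => f (n + 1) - f n), sum_range_sub]

end Matrix

section RegularizedCovariance

variable {ι : Type*} [DecidableEq ι] {T : ℕ}

def regularizedCovariance (lam : ℝ) (z : Fin T → ι → ℝ) (n : ℕ) : Matrix ι ι ℝ :=
  lam • 1 + ∑ s ∈ univ.filter (fun s : Fin T => (s : ℕ) < n), vecMulVec (z s) (z s)

variable (lam : ℝ) (z : Fin T → ι → ℝ)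

theorem regularizedCovariance_zero : regularizedCovariance lam z 0 = lam • 1 := by
  simp [regularizedCovariance]

theorem regularizedCovariance_succ (t : Fin T) :
    regularizedCovariance lam z (t + 1) =
      regularizedCovariance lam z t + vecMulVec (z t) (z t) := by
  have : univ.filter (fun s : Fin T => (s : ℕ) < t + 1) =
      insert t (univ.filter fun s : Fin T => (s : ℕ) < t) := by
    ext s; simp; omega
  rw [regularizedCovariance, regularizedCovariance, this, sum_insert (by simp),
    add_comm (vecMulVec _ _), add_assoc]

variable [Fintype ι]

theorem smul_one_le_regularizedCovariance (n : ℕ) :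
    lam • 1 ≤ regularizedCovariance lam z n :=
  le_add_of_nonneg_right (posSemidef_sum_vecMulVec_self _ z).nonneg

variable {lam}

theorem posDef_regularizedCovariance (hlam : 0 < lam) (n : ℕ) :
    (regularizedCovariance lam z n).PosDef :=
  (PosDef.one.smul hlam).add_posSemidef (posSemidef_sum_vecMulVec_self _ z)

theorem regularizedCovariance_le_smul_one (hz : ∀ t, z t ⬝ᵥ z t ≤ lam) :
    regularizedCovariance lam z T ≤ (lam * (T + 1)) • 1 := by
  calc regularizedCovariance lam z T = lam • 1 + ∑ s, vecMulVec (z s) (z s) := by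
        simp [regularizedCovariance]
    _ ≤ lam • 1 + ∑ _s : Fin T, lam • (1 : Matrix ι ι ℝ) := by
        gcongr with s
        refine (vecMulVec_self_le_smul_one (z s)).trans ?_
        rw [le_iff, ← sub_smul]
        exact PosSemidef.one.smul (sub_nonneg.2 (hz s))
    _ = (lam * (T + 1)) • 1 := by
        rw [sum_const, card_univ, Fintype.card_fin, ← Nat.cast_smul_eq_nsmul ℝ, smul_smul,
          ← add_smul]
        ring_nf

theorem log_det_regularizedCovariance_sub_le (hlam : 0 < lam) (hz : ∀ t, z t ⬝ᵥ z t ≤ lam) :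
    Real.log (regularizedCovariance lam z T).det - Real.log (regularizedCovariance lam z 0).det ≤
      Fintype.card ι * Real.log (T + 1) := by
  have hdet := det_le_pow_card_of_le_smul_one (posDef_regularizedCovariance z hlam T).posSemidef
    (regularizedCovariance_le_smul_one z hz)
  have hlog := Real.log_le_log (posDef_regularizedCovariance z hlam T).det_pos hdet
  rw [Real.log_pow, Real.log_mul hlam.ne' (by positivity)] at hlog
  rw [regularizedCovariance_zero, det_smul, det_one, mul_one, Real.log_pow]
  linarith

end RegularizedCovariance

theorem elliptical_potential_sq {d T : ℕ} (lam : ℝ) (hlam : 0 < lam)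
    (z : Fin T → Fin d → ℝ) (hz : ∀ t, z t ⬝ᵥ z t ≤ lam)
    (V : Fin T → Matrix (Fin d) (Fin d) ℝ)
    (hV : ∀ t, V t = lam • (1 : Matrix (Fin d) (Fin d) ℝ) +
      ∑ s ∈ Finset.univ.filter (fun s => s < t), vecMulVec (z s) (z s)) :
    ∑ t, z t ⬝ᵥ (V t)⁻¹.mulVec (z t) ≤ 2 * d * Real.log (T + 1) := by
  have hVW (t : Fin T) : V t = regularizedCovariance lam z t := hV t
  have hpotential := sum_dotProduct_inv_mulVec_le_two_mul_log_det _ z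
    (posDef_regularizedCovariance z hlam) (regularizedCovariance_succ lam z)
    fun t => dotProduct_inv_mulVec_le_one (posDef_regularizedCovariance z hlam t)
      (smul_one_le_regularizedCovariance lam z t) (hz t)
  have hlogdet := log_det_regularizedCovariance_sub_le z hlam hz
  rw [Fintype.card_fin] at hlogdet
  simp_rw [hVW]
  linarith
end

section
/- Let y_1,…,y_T ∈ ℝ^A and η > 0 with η·y_t(a) ≥ −1 for all t, a. Define x_1 uniform on [A] and x_{t+1}(a) = x_t(a)e^{−η y_t(a)} / Σ_{a'} x_t(a')e^{−η y_t(a')}. Then for any x in the simplex Δ_A, Σ_{t=1}^T Σ_a y_t(a)(x_t(a) − x(a)) ≤ (log A)/η + η Σ_{t=1}^T Σ_a x_t(a) y_t(a)². -/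
/-!
The proof tracks the potential `Φ t = ∑ a, p a * log (x t a)`. One Hedge step changes it by
`-η ⟪y t, p⟫ - log Z_t`, where `Z_t = ∑ a, x t a * exp (-η * y t a)` is the normaliser, and the
bounds `exp (-z) ≤ 1 - z + z ^ 2` for `z ≥ -1` and `log Z ≤ Z - 1` give
`log Z_t ≤ -η ⟪y t, x t⟫ + η² ∑ a, x t a * y t a ^ 2`. Summing over `t` telescopes, and the
potential starts at `-log A` and always stays `≤ 0`.
-/

open Finset Real

lemma exp_neg_le_one_sub_add_sq {z : ℝ} (hz : -1 ≤ z) : exp (-z) ≤ 1 - z + z ^ 2 := by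
  rcases le_or_gt z 1 with hz1 | hz1
  · have h := abs_exp_sub_one_sub_id_le (x := -z) (abs_le.mpr ⟨by linarith, by linarith⟩)
    linarith [(abs_le.mp h).2]
  · have : exp (-z) ≤ 1 := exp_le_one_iff.mpr (by linarith)
    nlinarith

structure IsPositiveDistribution {ι : Type*} [Fintype ι] (w : ι → ℝ) : Prop where
  pos : ∀ a, 0 < w a
  sum_eq_one : ∑ a, w a = 1

section Hedge

variable {ι : Type*} [Fintype ι] {η : ℝ} {ℓ w p : ι → ℝ}

noncomputable def hedgeNormalizer (η : ℝ) (ℓ w : ι → ℝ) : ℝ :=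
  ∑ a, w a * exp (-η * ℓ a)

noncomputable def hedgeUpdate (η : ℝ) (ℓ w : ι → ℝ) : ι → ℝ :=
  fun a => w a * exp (-η * ℓ a) / hedgeNormalizer η ℓ w

namespace IsPositiveDistribution

lemma hedgeNormalizer_pos (hw : IsPositiveDistribution w) : 0 < hedgeNormalizer η ℓ w := by
  obtain ⟨a, -, ha⟩ := exists_ne_zero_of_sum_ne_zero (hw.sum_eq_one.trans_ne one_ne_zero)
  exact sum_pos' (fun b _ => (mul_pos (hw.pos b) (exp_pos _)).le)
    ⟨a, mem_univ a, mul_pos (hw.pos a) (exp_pos _)⟩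

lemma sum_mul_log_nonpos (hw : IsPositiveDistribution w) (hp : ∀ a, 0 ≤ p a) :
    ∑ a, p a * log (w a) ≤ 0 := by
  refine sum_nonpos fun a _ =>
    mul_nonpos_of_nonneg_of_nonpos (hp a) (log_nonpos (hw.pos a).le ?_)
  calc w a ≤ ∑ b, w b := single_le_sum (fun b _ => (hw.pos b).le) (mem_univ a)
    _ = 1 := hw.sum_eq_one

lemma log_hedgeNormalizer_le (hw : IsPositiveDistribution w) (hℓ : ∀ a, -1 ≤ η * ℓ a) :
    log (hedgeNormalizer η ℓ w) ≤
      -η * ∑ a, w a * ℓ a + η ^ 2 * ∑ a, w a * ℓ a ^ 2 := by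
  have hZ : hedgeNormalizer η ℓ w ≤ ∑ a, w a * (1 - η * ℓ a + (η * ℓ a) ^ 2) :=
    sum_le_sum fun a _ => mul_le_mul_of_nonneg_left
      (by simpa only [neg_mul] using exp_neg_le_one_sub_add_sq (hℓ a)) (hw.pos a).le
  have hexpand : ∑ a, w a * (1 - η * ℓ a + (η * ℓ a) ^ 2) =
      ∑ a, w a - η * ∑ a, w a * ℓ a + η ^ 2 * ∑ a, w a * ℓ a ^ 2 := by
    simp only [mul_sum, ← sum_sub_distrib, ← sum_add_distrib]
    exact sum_congr rfl fun a _ => by ring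
  rw [hexpand, hw.sum_eq_one] at hZ
  linarith [log_le_sub_one_of_pos (hw.hedgeNormalizer_pos (η := η) (ℓ := ℓ))]

lemma sum_mul_log_hedgeUpdate (hw : IsPositiveDistribution w) (hp : ∑ a, p a = 1) :
    ∑ a, p a * log (hedgeUpdate η ℓ w a) =
      ∑ a, p a * log (w a) - η * ∑ a, p a * ℓ a - log (hedgeNormalizer η ℓ w) := by
  have hlog a :
      log (hedgeUpdate η ℓ w a) = log (w a) - η * ℓ a - log (hedgeNormalizer η ℓ w) := by
    rw [hedgeUpdate, log_div (mul_pos (hw.pos a) (exp_pos _)).ne' hw.hedgeNormalizer_pos.ne',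
      log_mul (hw.pos a).ne' (exp_pos _).ne', log_exp]
    ring
  simp only [hlog, mul_sub, sum_sub_distrib, ← sum_mul, hp, mul_sum]
  simp only [one_mul, mul_left_comm]

lemma sum_mul_log_hedgeUpdate_ge (hw : IsPositiveDistribution w) (hp : ∑ a, p a = 1)
    (hℓ : ∀ a, -1 ≤ η * ℓ a) :
    η * ∑ a, ℓ a * (w a - p a) - η ^ 2 * ∑ a, w a * ℓ a ^ 2 ≤
      ∑ a, p a * log (hedgeUpdate η ℓ w a) - ∑ a, p a * log (w a) := by
  have hregret : ∑ a, ℓ a * (w a - p a) = ∑ a, w a * ℓ a - ∑ a, p a * ℓ a := by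
    rw [← sum_sub_distrib]
    exact sum_congr rfl fun a _ => by ring
  rw [hw.sum_mul_log_hedgeUpdate hp, hregret]
  linarith [hw.log_hedgeNormalizer_le hℓ]

end IsPositiveDistribution

lemma hedgeUpdate_isPositiveDistribution (hw : IsPositiveDistribution w) :
    IsPositiveDistribution (hedgeUpdate η ℓ w) where
  pos a := div_pos (mul_pos (hw.pos a) (exp_pos _)) hw.hedgeNormalizer_pos
  sum_eq_one := by
    simp only [hedgeUpdate, ← sum_div]
    exact div_self hw.hedgeNormalizer_pos.ne'

lemma isPositiveDistribution_hedge_iterate {T : ℕ} {y : ℕ → ι → ℝ} {x : ℕ → ι → ℝ}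
    (hx1 : IsPositiveDistribution (x 1))
    (hrec : ∀ t ∈ Icc 1 T, x (t + 1) = hedgeUpdate η (y t) (x t)) :
    ∀ t ∈ Icc 1 (T + 1), IsPositiveDistribution (x t) := by
  intro t ht
  obtain ⟨ht1, htT⟩ := mem_Icc.mp ht
  induction t, ht1 using Nat.le_induction with
  | base => exact hx1
  | succ t ht1 ih =>
    rw [hrec t (mem_Icc.mpr ⟨ht1, by omega⟩)]
    exact hedgeUpdate_isPositiveDistribution (ih (mem_Icc.mpr ⟨ht1, by omega⟩) (by omega))

end Hedge

theorem hedge_regret (A T : ℕ) (hA : 0 < A) (η : ℝ) (hη : 0 < η)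
    (y : ℕ → Fin A → ℝ)
    (hy : ∀ t ∈ Finset.Icc 1 T, ∀ a, -1 ≤ η * y t a)
    (x : ℕ → Fin A → ℝ)
    (hx1 : ∀ a, x 1 a = 1 / A)
    (hrec : ∀ t ∈ Finset.Icc 1 T, ∀ a, x (t + 1) a =
      x t a * Real.exp (-η * y t a) / ∑ a', x t a' * Real.exp (-η * y t a'))
    (p : Fin A → ℝ) (hp : ∀ a, 0 ≤ p a) (hps : ∑ a, p a = 1) :
    ∑ t ∈ Finset.Icc 1 T, ∑ a, y t a * (x t a - p a) ≤
      Real.log A / η + η * ∑ t ∈ Finset.Icc 1 T, ∑ a, x t a * (y t a) ^ 2 := by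
  have hA' : (A : ℝ) ≠ 0 := Nat.cast_ne_zero.mpr hA.ne'
  have hupdate : ∀ t ∈ Icc 1 T, x (t + 1) = hedgeUpdate η (y t) (x t) :=
    fun t ht => funext (hrec t ht)
  have hx : ∀ t ∈ Icc 1 (T + 1), IsPositiveDistribution (x t) :=
    isPositiveDistribution_hedge_iterate
      ⟨fun a => by rw [hx1]; positivity, by simp [hx1, hA']⟩ hupdate
  set Φ : ℕ → ℝ := fun t => ∑ a, p a * log (x t a)
  have hstep : ∀ t ∈ Icc 1 T,
      η * ∑ a, y t a * (x t a - p a) - η ^ 2 * ∑ a, x t a * y t a ^ 2 ≤ Φ (t + 1) - Φ t := by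
    intro t ht
    dsimp only [Φ]
    rw [hupdate t ht]
    exact (hx t (Icc_subset_Icc_right (by omega) ht)).sum_mul_log_hedgeUpdate_ge hps (hy t ht)
  have htelescope : η * ∑ t ∈ Icc 1 T, ∑ a, y t a * (x t a - p a) -
      η ^ 2 * ∑ t ∈ Icc 1 T, ∑ a, x t a * y t a ^ 2 ≤ Φ (T + 1) - Φ 1 := by
    rw [mul_sum, mul_sum, ← sum_sub_distrib, ← Ico_add_one_right_eq_Icc,
      ← sum_Ico_sub Φ (by omega)]
    exact sum_le_sum fun t ht => hstep t (by rwa [Ico_add_one_right_eq_Icc] at ht)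
  have hΦ1 : Φ 1 = -log A := by
    simp only [Φ, hx1, ← sum_mul, hps, one_mul, one_div, log_inv]
  have hΦT : Φ (T + 1) ≤ 0 := (hx (T + 1) (by simp)).sum_mul_log_nonpos hp
  rw [div_add' _ _ _ hη.ne', le_div_iff₀ hη]
  linarith
end

section
/- Let {X_t}_{t≥1} be a sequence of random variables adapted to a filtration {F_t} with 0 ≤ X_t ≤ 1 almost surely. Then with probability at least 1 − δ, Σ_{t=1}^T E[X_t | F_{t−1}] ≤ 2·Σ_{t=1}^T X_t + 4·log(2/δ). -/
/-! Write `Y t = E[X t | ℱ (t-1)]`. Taking conditional expectations in `exp (-x) ≤ 1 - x/2`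
(valid on `[0, 1]`) gives `E[exp (-X t) | ℱ (t-1)] ≤ 1 - Y t / 2 ≤ exp (-Y t / 2)`, so
`exp (∑_{t ≤ n} (Y t / 2 - X t))` is a supermartingale starting at `1`. Markov's inequality then
gives `∑ Y t / 2 - ∑ X t < log (1/δ)` with probability at least `1 - δ`. -/

open MeasureTheory ProbabilityTheory Finset Real

lemma Real.exp_neg_le_one_sub_half {x : ℝ} (h0 : 0 ≤ x) (h1 : x ≤ 1) :
    exp (-x) ≤ 1 - x / 2 := by
  have key : 1 ≤ (1 - x / 2) * exp x := by nlinarith [add_one_le_exp x, exp_pos x]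
  rw [exp_neg, inv_le_iff_one_le_mul₀ (exp_pos x)]
  linarith

section CondExp

variable {Ω : Type*} {m m0 : MeasurableSpace Ω} {μ : Measure Ω} [IsFiniteMeasure μ] {Z : Ω → ℝ}

lemma condExp_exp_neg_le (hm : m ≤ m0) (hZ_meas : AEStronglyMeasurable Z μ)
    (hZ : ∀ᵐ ω ∂μ, 0 ≤ Z ω ∧ Z ω ≤ 1) :
    μ[fun ω ↦ exp (-Z ω) | m] ≤ᵐ[μ] fun ω ↦ exp (-(μ[Z | m] ω / 2)) := by
  have hZ_int : Integrable Z μ := Integrable.of_bound hZ_meas 1 <| by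
    filter_upwards [hZ] with ω hω
    rw [Real.norm_eq_abs, abs_le]
    constructor <;> linarith [hω.1, hω.2]
  have h_linear : μ[fun ω ↦ 1 - Z ω / 2 | m] =ᵐ[μ] fun ω ↦ 1 - μ[Z | m] ω / 2 := by
    have h_eq : (fun ω ↦ 1 - Z ω / 2) = (fun _ ↦ (1 : ℝ)) - (2⁻¹ : ℝ) • Z := by
      funext ω; simp [div_eq_inv_mul]
    rw [h_eq]
    filter_upwards [condExp_sub (integrable_const 1) (hZ_int.smul (2⁻¹ : ℝ)) m,
      condExp_smul (2⁻¹ : ℝ) Z m] with ω h_sub h_smul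
    simp [h_sub, h_smul, condExp_const hm, div_eq_inv_mul]
  have h_mono : μ[fun ω ↦ exp (-Z ω) | m] ≤ᵐ[μ] μ[fun ω ↦ 1 - Z ω / 2 | m] :=
    condExp_mono
      (Integrable.of_bound (continuous_exp.comp_aestronglyMeasurable hZ_meas.neg) 1 <| by
        filter_upwards [hZ] with ω hω
        rw [Real.norm_eq_abs, abs_of_pos (exp_pos _), exp_le_one_iff]
        linarith [hω.1])
      ((integrable_const 1).sub (hZ_int.div_const 2))
      (by filter_upwards [hZ] with ω hω using exp_neg_le_one_sub_half hω.1 hω.2)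
  filter_upwards [h_mono, h_linear] with ω h_le h_eq
  rw [h_eq] at h_le
  linarith [add_one_le_exp (-(μ[Z | m] ω / 2))]

lemma integral_mul_exp_half_condExp_sub_le (hm : m ≤ m0) {g : Ω → ℝ} (hg : StronglyMeasurable[m] g)
    (hg_nonneg : 0 ≤ g) (hg_int : Integrable g μ) (hZ_meas : AEStronglyMeasurable Z μ)
    (hZ : ∀ᵐ ω ∂μ, 0 ≤ Z ω ∧ Z ω ≤ 1) :
    ∫ ω, g ω * exp (μ[Z | m] ω / 2 - Z ω) ∂μ ≤ ∫ ω, g ω ∂μ := by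
  set Y := μ[Z | m]
  have hY : ∀ᵐ ω ∂μ, |Y ω| ≤ 1 := ae_bdd_abs_condExp_of_ae_bdd_abs <| by
    filter_upwards [hZ] with ω hω
    rw [abs_le]
    constructor <;> linarith [hω.1, hω.2]
  have hexpY_meas : StronglyMeasurable[m] fun ω ↦ exp (Y ω / 2) :=
    (continuous_exp.comp (continuous_id.div_const 2)).comp_stronglyMeasurable
      stronglyMeasurable_condExp
  set g' : Ω → ℝ := fun ω ↦ g ω * exp (Y ω / 2)
  have hg'_int : Integrable g' μ :=
    hg_int.mul_bdd (hexpY_meas.mono hm).aestronglyMeasurable (c := exp (1 / 2)) <| by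
      filter_upwards [hY] with ω hω
      rw [Real.norm_eq_abs, abs_of_pos (exp_pos _), exp_le_exp]
      linarith [(abs_le.1 hω).2]
  set h : Ω → ℝ := fun ω ↦ exp (-Z ω)
  have hh_int : Integrable h μ :=
    Integrable.of_bound (continuous_exp.comp_aestronglyMeasurable hZ_meas.neg) 1 <| by
      filter_upwards [hZ] with ω hω
      rw [Real.norm_eq_abs, abs_of_pos (exp_pos _), exp_le_one_iff]
      linarith [hω.1]
  have hg'h_int : Integrable (g' * h) μ :=
    hg'_int.mul_bdd hh_int.aestronglyMeasurable (c := 1) <| by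
      filter_upwards [hZ] with ω hω
      rw [Real.norm_eq_abs, abs_of_pos (exp_pos _), exp_le_one_iff]
      linarith [hω.1]
  have h_pull : μ[g' * h | m] =ᵐ[μ] g' * μ[h | m] :=
    condExp_mul_of_stronglyMeasurable_left (hg.mul hexpY_meas) hg'h_int hh_int
  calc ∫ ω, g ω * exp (Y ω / 2 - Z ω) ∂μ = ∫ ω, (g' * h) ω ∂μ := by
        congr 1 with ω
        simp only [g', h, Pi.mul_apply, sub_eq_add_neg, exp_add, mul_assoc]
    _ = ∫ ω, μ[g' * h | m] ω ∂μ := (integral_condExp hm).symm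
    _ ≤ ∫ ω, g ω ∂μ := by
      refine integral_mono_ae integrable_condExp hg_int ?_
      filter_upwards [h_pull, condExp_exp_neg_le hm hZ_meas hZ] with ω h_eq h_le
      calc μ[g' * h | m] ω = g' ω * μ[h | m] ω := h_eq
        _ ≤ g' ω * exp (-(Y ω / 2)) :=
          mul_le_mul_of_nonneg_left h_le (mul_nonneg (hg_nonneg ω) (exp_pos _).le)
        _ = g ω := by simp only [g', mul_assoc, ← exp_add, add_neg_cancel, exp_zero, mul_one]

end CondExp

lemma ofReal_one_sub_le_measure_lt_log_inv {Ω : Type*} {m0 : MeasurableSpace Ω} {μ : Measure Ω}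
    [IsProbabilityMeasure μ] {f : Ω → ℝ} (hf : Measurable f)
    (hf_int : Integrable (fun ω ↦ exp (f ω)) μ) (hf_le : ∫ ω, exp (f ω) ∂μ ≤ 1)
    {δ : ℝ} (hδ : 0 < δ) :
    ENNReal.ofReal (1 - δ) ≤ μ {ω | f ω < log δ⁻¹} := by
  have h_markov : μ.real {ω | log δ⁻¹ ≤ f ω} ≤ δ := by
    have h := measure_ge_le_exp_mul_mgf (log δ⁻¹) zero_le_one (by simpa using hf_int)
    rw [mgf, neg_one_mul, exp_neg, exp_log (inv_pos.2 hδ), inv_inv] at h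
    simp only [one_mul] at h
    exact h.trans (mul_le_of_le_one_right hδ.le hf_le)
  have h_compl : {ω | f ω < log δ⁻¹} = {ω | log δ⁻¹ ≤ f ω}ᶜ := by ext; simp
  rw [h_compl, ← ofReal_measureReal, measureReal_compl (measurableSet_le measurable_const hf),
    probReal_univ]
  exact ENNReal.ofReal_le_ofReal (by linarith)

section Compensator

variable {Ω : Type*} {m0 : MeasurableSpace Ω} (μ : Measure Ω) (ℱ : Filtration ℕ m0) (X : ℕ → Ω → ℝ)

noncomputable def halfCompensatedSum (n : ℕ) (ω : Ω) : ℝ :=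
  ∑ t ∈ Icc 1 n, (μ[X t | ℱ (t - 1)] ω / 2 - X t ω)

lemma halfCompensatedSum_succ (n : ℕ) (ω : Ω) :
    halfCompensatedSum μ ℱ X (n + 1) ω =
      halfCompensatedSum μ ℱ X n ω + (μ[X (n + 1) | ℱ n] ω / 2 - X (n + 1) ω) := by
  simp only [halfCompensatedSum]
  rw [sum_Icc_succ_top (Nat.le_add_left 1 n)]
  rfl

variable {μ ℱ X}

lemma stronglyMeasurable_halfCompensatedSum (hX : Adapted ℱ X) (n : ℕ) :
    StronglyMeasurable[ℱ n] (halfCompensatedSum μ ℱ X n) := by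
  refine Finset.stronglyMeasurable_fun_sum _ fun t ht ↦ ?_
  have htn : t ≤ n := (mem_Icc.1 ht).2
  exact ((continuous_id.div_const 2).comp_stronglyMeasurable
    (stronglyMeasurable_condExp.mono (ℱ.mono (t.sub_le 1 |>.trans htn)))).sub
    ((hX t).stronglyMeasurable.mono (ℱ.mono htn))

lemma halfCompensatedSum_le (hX : ∀ t, ∀ᵐ ω ∂μ, 0 ≤ X t ω ∧ X t ω ≤ 1)
    (n : ℕ) : ∀ᵐ ω ∂μ, halfCompensatedSum μ ℱ X n ω ≤ n / 2 := by
  have hY : ∀ t, ∀ᵐ ω ∂μ, |μ[X t | ℱ (t - 1)] ω| ≤ 1 := fun t ↦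
    ae_bdd_abs_condExp_of_ae_bdd_abs <| (hX t).mono fun ω h ↦ abs_le.2 ⟨by linarith [h.1], h.2⟩
  filter_upwards [ae_all_iff.2 hX, ae_all_iff.2 hY] with ω hXω hYω
  calc halfCompensatedSum μ ℱ X n ω ≤ ∑ _t ∈ Icc 1 n, (1 / 2 : ℝ) :=
        sum_le_sum fun t _ ↦ by linarith [hXω t, (abs_le.1 (hYω t)).2]
    _ = n / 2 := by
      simp only [one_div, sum_const, Nat.card_Icc, add_tsub_cancel_right, nsmul_eq_mul]; ring

lemma integrable_exp_halfCompensatedSum [IsFiniteMeasure μ] (hX_adapted : Adapted ℱ X)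
    (hX : ∀ t, ∀ᵐ ω ∂μ, 0 ≤ X t ω ∧ X t ω ≤ 1) (n : ℕ) :
    Integrable (fun ω ↦ exp (halfCompensatedSum μ ℱ X n ω)) μ :=
  Integrable.of_bound (continuous_exp.comp_stronglyMeasurable
      ((stronglyMeasurable_halfCompensatedSum hX_adapted n).mono (ℱ.le n))).aestronglyMeasurable
    (exp (n / 2)) <| by
    filter_upwards [halfCompensatedSum_le hX n] with ω hω
    rwa [Real.norm_eq_abs, abs_of_pos (exp_pos _), exp_le_exp]

lemma integral_exp_halfCompensatedSum_le_one [IsProbabilityMeasure μ] (hX_adapted : Adapted ℱ X)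
    (hX : ∀ t, ∀ᵐ ω ∂μ, 0 ≤ X t ω ∧ X t ω ≤ 1) (n : ℕ) :
    ∫ ω, exp (halfCompensatedSum μ ℱ X n ω) ∂μ ≤ 1 := by
  induction n with
  | zero => simp [halfCompensatedSum]
  | succ n ih =>
    calc ∫ ω, exp (halfCompensatedSum μ ℱ X (n + 1) ω) ∂μ
        = ∫ ω, exp (halfCompensatedSum μ ℱ X n ω) *
            exp (μ[X (n + 1) | ℱ n] ω / 2 - X (n + 1) ω) ∂μ := by
          simp only [halfCompensatedSum_succ, exp_add]
      _ ≤ ∫ ω, exp (halfCompensatedSum μ ℱ X n ω) ∂μ :=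
          integral_mul_exp_half_condExp_sub_le (ℱ.le n)
            (continuous_exp.comp_stronglyMeasurable
              (stronglyMeasurable_halfCompensatedSum hX_adapted n))
            (fun ω ↦ (exp_pos _).le) (integrable_exp_halfCompensatedSum hX_adapted hX n)
            ((hX_adapted (n + 1)).mono (ℱ.le _) le_rfl).aestronglyMeasurable (hX (n + 1))
      _ ≤ 1 := ih

end Compensator

theorem multiplicative_concentration_general
    {Ω : Type*} {m0 : MeasurableSpace Ω} (μ : Measure Ω) [IsProbabilityMeasure μ]
    (ℱ : Filtration ℕ m0) (X : ℕ → Ω → ℝ)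
    (hadapted : Adapted ℱ X)
    (hbdd : ∀ t, ∀ᵐ ω ∂μ, 0 ≤ X t ω ∧ X t ω ≤ 1)
    (T : ℕ) (δ : ℝ) (hδ : δ ∈ Set.Ioo (0 : ℝ) 1) :
    ENNReal.ofReal (1 - δ) ≤
      μ {ω | ∑ t ∈ Finset.Icc 1 T, (μ[X t | ℱ (t - 1)]) ω ≤
        2 * ∑ t ∈ Finset.Icc 1 T, X t ω + 4 * Real.log (2 / δ)} := by
  obtain ⟨hδ0, hδ1⟩ := hδ
  have h_log : log δ⁻¹ ≤ 2 * log (2 / δ) := by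
    have h_inv_pos : 0 ≤ log δ⁻¹ := log_nonneg ((one_le_inv₀ hδ0).2 hδ1.le)
    rw [div_eq_mul_inv, log_mul two_ne_zero (inv_ne_zero hδ0.ne')]
    linarith [log_pos one_lt_two]
  refine (ofReal_one_sub_le_measure_lt_log_inv
    (((stronglyMeasurable_halfCompensatedSum hadapted T).mono (ℱ.le T)).measurable)
    (integrable_exp_halfCompensatedSum hadapted hbdd T)
    (integral_exp_halfCompensatedSum_le_one hadapted hbdd T) hδ0).trans (measure_mono fun ω hω ↦ ?_)
  simp only [Set.mem_ofPred_eq, halfCompensatedSum, sum_sub_distrib, ← sum_div] at hω ⊢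
  linarith

theorem multiplicative_concentration
    {Ω : Type*} {m0 : MeasurableSpace Ω} (μ : Measure Ω) [IsProbabilityMeasure μ]
    (ℱ : Filtration ℕ m0) (X : ℕ → Ω → ℝ)
    (hadapted : Adapted ℱ X)
    (hbdd : ∀ t, ∀ᵐ ω ∂μ, 0 ≤ X t ω ∧ X t ω ≤ 1)
    (T : ℕ) (hT : 1 ≤ T) (δ : ℝ) (hδ : δ ∈ Set.Ioo (0 : ℝ) 1) :
    ENNReal.ofReal (1 - δ) ≤
      μ {ω | ∑ t ∈ Finset.Icc 1 T, (μ[X t | ℱ (t - 1)]) ω ≤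
        2 * ∑ t ∈ Finset.Icc 1 T, X t ω + 4 * Real.log (2 / δ)} :=
  multiplicative_concentration_general μ ℱ X hadapted hbdd T δ hδ
end
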